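/- Let δ > 0, α ∈ (0, 1/2), κ > 0, ρ > 0, and ω the peridynamic dispersion relation. Setting M = (√κ δ^{1-2α}/√ρ) ( ∫_0^{+∞} (1 - cos τ)/τ^{1+2α} dτ )^{-1/2}, one has liminf_{ξ → +∞} ξ^{1+α} ω''(ξ) = −M and limsup_{ξ → +∞} ξ^{1+α} ω''(ξ) = M. In particular ω changes convexity infinitely often at infinity. -/

import Mathlib

open MeasureTheory Filter Set Topology

/-- The peridynamic dispersion relation. -/
noncomputable def omega (κ ρ δ α ξ : ℝ) : ℝ :=
  Real.sqrt ((2 * κ / (ρ * δ ^ (2 * α))) *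
    ∫ z in (-1 : ℝ)..1, (1 - Real.cos (ξ * δ * z)) / |z| ^ (1 + 2 * α))

namespace OscAux

variable {α : ℝ}

/-- the integrand, in product form -/
noncomputable def f (α τ : ℝ) : ℝ := (1 - Real.cos τ) * τ ^ (-(1 + 2 * α))

lemma f_contOn (α : ℝ) : ContinuousOn (f α) (Ioi 0) := by
  apply ContinuousOn.mul (by fun_prop)
  intro x hx
  exact (Real.continuousAt_rpow_const x _ (Or.inl (ne_of_gt hx))).continuousWithinAt

lemma f_nonneg {τ : ℝ} (hτ : 0 < τ) : 0 ≤ f α τ := by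
  have h1 : Real.cos τ ≤ 1 := Real.cos_le_one τ
  have := Real.rpow_nonneg hτ.le (-(1 + 2 * α))
  unfold f; nlinarith

lemma f_integrable (hα : 0 < α) (hα1 : α < 1 / 2) : IntegrableOn (f α) (Ioi 0) := by
  have h1 : IntegrableOn (f α) (Ioc 0 1) := by
    have hb : IntegrableOn (fun τ : ℝ => τ ^ (1 - 2 * α) / 2) (Ioc 0 1) := by
      have := (intervalIntegral.intervalIntegrable_rpow' (a := 0) (b := 1)
        (r := 1 - 2 * α) (by linarith)).div_const 2
      rwa [intervalIntegrable_iff_integrableOn_Ioc_of_le zero_le_one] at this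
    refine Integrable.mono' hb (((f_contOn α).mono Ioc_subset_Ioi_self).aestronglyMeasurable
      measurableSet_Ioc) ?_
    refine (ae_restrict_iff' measurableSet_Ioc).2 (.of_forall fun τ hτ => ?_)
    have hτ0 : 0 < τ := hτ.1
    have h2 : 1 - Real.cos τ ≤ τ ^ 2 / 2 := by
      have := Real.one_sub_sq_div_two_le_cos (x := τ); linarith
    have h3 : (0:ℝ) ≤ τ ^ (-(1 + 2 * α)) := Real.rpow_nonneg hτ0.le _
    rw [Real.norm_of_nonneg (f_nonneg hτ0)]
    have : f α τ ≤ τ ^ 2 / 2 * τ ^ (-(1 + 2 * α)) := by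
      unfold f; nlinarith [Real.cos_le_one τ]
    calc f α τ ≤ τ ^ 2 / 2 * τ ^ (-(1 + 2 * α)) := this
      _ = τ ^ (1 - 2 * α) / 2 := by
          rw [div_mul_eq_mul_div, ← Real.rpow_natCast τ 2, ← Real.rpow_add hτ0]
          norm_num
          ring_nf
  have h2 : IntegrableOn (f α) (Ioi 1) := by
    have hb : IntegrableOn (fun τ : ℝ => 2 * τ ^ (-(1 + 2 * α))) (Ioi 1) :=
      (integrableOn_Ioi_rpow_of_lt (by linarith) one_pos).const_mul 2
    have hsub : Ioi (1:ℝ) ⊆ Ioi 0 := fun x hx => mem_Ioi.2 (lt_trans one_pos (mem_Ioi.1 hx))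
    refine Integrable.mono' hb (((f_contOn α).mono hsub).aestronglyMeasurable
      measurableSet_Ioi) ?_
    refine (ae_restrict_iff' measurableSet_Ioi).2 (.of_forall fun τ hτ => ?_)
    have hτ0 : (0:ℝ) < τ := lt_trans one_pos hτ
    have h3 : (0:ℝ) ≤ τ ^ (-(1 + 2 * α)) := Real.rpow_nonneg hτ0.le _
    rw [Real.norm_of_nonneg (f_nonneg hτ0)]
    unfold f; nlinarith [Real.neg_one_le_cos τ]
  rw [← Ioc_union_Ioi_eq_Ioi (zero_le_one (α := ℝ))]
  exact h1.union h2

end OscAux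

namespace OscAux

/-- partial integral -/
noncomputable def F (α x : ℝ) : ℝ := ∫ τ in (0:ℝ)..x, f α τ

/-- full integral -/
noncomputable def I (α : ℝ) : ℝ := ∫ τ in Ioi (0:ℝ), f α τ

lemma I_eq_J (α : ℝ) :
    I α = ∫ τ in Set.Ioi (0:ℝ), (1 - Real.cos τ) / τ ^ (1 + 2 * α) := by
  refine setIntegral_congr_fun measurableSet_Ioi fun τ hτ => ?_
  rw [f, Real.rpow_neg (le_of_lt hτ), div_eq_mul_inv]

lemma F_tendsto (hα : 0 < α) (hα1 : α < 1 / 2) :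
    Tendsto (fun x => F α x) atTop (𝓝 (I α)) :=
  intervalIntegral_tendsto_integral_Ioi 0 (f_integrable hα hα1) tendsto_id

lemma I_pos (hα : 0 < α) (hα1 : α < 1 / 2) : 0 < I α := by
  have hne : 0 ≤ᵐ[volume.restrict (Ioi (0:ℝ))] f α :=
    (ae_restrict_iff' measurableSet_Ioi).2 (.of_forall fun τ hτ => f_nonneg hτ)
  rw [I, setIntegral_pos_iff_support_of_nonneg_ae hne (f_integrable hα hα1)]
  have hsub : Ioo (0:ℝ) Real.pi ⊆ Function.support (f α) ∩ Ioi 0 := by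
    intro τ hτ
    have hτ0 : 0 < τ := hτ.1
    have hcos : Real.cos τ < 1 := by
      have habs : |τ| ≤ Real.pi := by
        rw [abs_of_pos hτ0]; exact hτ.2.le
      have := Real.cos_le_one_sub_mul_cos_sq habs
      have hq : 0 < 2 / Real.pi ^ 2 * τ ^ 2 := by positivity
      linarith
    refine ⟨?_, hτ0⟩
    have : 0 < f α τ :=
      mul_pos (by linarith) (Real.rpow_pos_of_pos hτ0 _)
    exact ne_of_gt this
  calc (0:ENNReal) < volume (Ioo (0:ℝ) Real.pi) := by
        rw [Real.volume_Ioo]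
        simp [Real.pi_pos]
      _ ≤ _ := measure_mono hsub

lemma F_hasDeriv (hα : 0 < α) (hα1 : α < 1 / 2) {x : ℝ} (hx : 0 < x) :
    HasDerivAt (F α) (f α x) x := by
  have hii : IntervalIntegrable (f α) volume 0 x := by
    rw [intervalIntegrable_iff_integrableOn_Ioc_of_le hx.le]
    exact (f_integrable hα hα1).mono_set Ioc_subset_Ioi_self
  refine intervalIntegral.integral_hasDerivAt_right hii
    ⟨Ioi 0, isOpen_Ioi.mem_nhds hx, ((f_contOn α).mono subset_rfl).aestronglyMeasurable
      measurableSet_Ioi⟩ ?_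
  exact (f_contOn α).continuousAt (isOpen_Ioi.mem_nhds hx)

end OscAux

namespace OscAux

lemma omega_eq (κ ρ δ α : ℝ) (hρ : 0 < ρ) (hδ : 0 < δ) (hα : 0 < α) (hα1 : α < 1 / 2)
    {ξ : ℝ} (hξ : 0 < ξ) :
    omega κ ρ δ α ξ = ξ ^ α * Real.sqrt (4 * κ / ρ * F α (δ * ξ)) := by
  unfold omega
  set b := δ * ξ with hbdef
  have hb : 0 < b := mul_pos hδ hξ
  set e := 1 + 2 * α with hedef
  set G : ℝ → ℝ := fun z => (1 - Real.cos (ξ * δ * z)) / |z| ^ e with hGdef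
  have hGeq : ∀ z ∈ Icc (0:ℝ) 1, G z = b ^ e * f α (b * z) := by
    intro z hz
    rcases eq_or_lt_of_le hz.1 with h0 | h0
    · simp [hGdef, f, ← h0]
    · have hbz : 0 < b * z := mul_pos hb h0
      show (1 - Real.cos (ξ * δ * z)) / |z| ^ e = b ^ e * ((1 - Real.cos (b * z)) * (b * z) ^ (-e))
      have hξδ : ξ * δ * z = b * z := by rw [hbdef]; ring
      have hbe : (0:ℝ) < b ^ e := Real.rpow_pos_of_pos hb e
      have hze : (0:ℝ) < z ^ e := Real.rpow_pos_of_pos h0 e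
      rw [hξδ, abs_of_pos h0, Real.mul_rpow hb.le h0.le, Real.rpow_neg hb.le,
        Real.rpow_neg h0.le]
      field_simp
  have hfi : IntervalIntegrable (f α) volume 0 b := by
    rw [intervalIntegrable_iff_integrableOn_Ioc_of_le hb.le]
    exact (f_integrable hα hα1).mono_set Ioc_subset_Ioi_self
  have hcomp : IntervalIntegrable (fun z => f α (b * z)) volume 0 1 := by
    have := hfi.comp_mul_left (c := b)
    rwa [zero_div, div_self hb.ne'] at this
  have hg1 : IntervalIntegrable G volume 0 1 := by
    rw [intervalIntegrable_iff_integrableOn_Ioc_of_le zero_le_one]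
    have h2 : IntegrableOn (fun z => b ^ e * f α (b * z)) (Ioc 0 1) := by
      rw [← intervalIntegrable_iff_integrableOn_Ioc_of_le zero_le_one]
      exact hcomp.const_mul _
    exact h2.congr_fun (fun z hz => (hGeq z (Ioc_subset_Icc_self hz)).symm) measurableSet_Ioc
  have heven : (fun z => G (-z)) = G := by
    funext z
    show (1 - Real.cos (ξ * δ * -z)) / |(-z)| ^ e = _
    rw [abs_neg, mul_neg, Real.cos_neg]
  have hgneg : IntervalIntegrable G volume (-1) 0 := by
    have := hg1.comp_mul_left (c := -1)
    simp only [neg_one_mul] at this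
    rw [heven] at this
    simpa using this.symm
  have hsplit : (∫ z in (-1:ℝ)..1, G z) = (∫ z in (-1:ℝ)..0, G z) + ∫ z in (0:ℝ)..1, G z :=
    (intervalIntegral.integral_add_adjacent_intervals hgneg hg1).symm
  have hneg : (∫ z in (-1:ℝ)..0, G z) = ∫ z in (0:ℝ)..1, G z := by
    have h := intervalIntegral.integral_comp_neg (a := (0:ℝ)) (b := (1:ℝ)) G
    rw [heven] at h
    norm_num at h
    exact h.symm
  have hval : (∫ z in (0:ℝ)..1, G z) = b ^ e * (b⁻¹ * F α b) := by
    rw [intervalIntegral.integral_congr (g := fun z => b ^ e * f α (b * z))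
      (by rw [uIcc_of_le zero_le_one]; exact hGeq), intervalIntegral.integral_const_mul,
      intervalIntegral.integral_comp_mul_left (f := f α) hb.ne']
    norm_num [F]
  rw [hsplit, hneg, hval]
  have harg : 2 * κ / (ρ * δ ^ (2 * α)) * (b ^ e * (b⁻¹ * F α b) + b ^ e * (b⁻¹ * F α b))
      = ξ ^ (2 * α) * (4 * κ / ρ * F α b) := by
    have hbe : b ^ e = δ ^ (2 * α) * ξ ^ (2 * α) * b := by
      rw [show e = 2 * α + 1 by rw [hedef]; ring, Real.rpow_add hb, Real.rpow_one,
        hbdef, Real.mul_rpow hδ.le hξ.le]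
    rw [hbe]
    have h1 : (0:ℝ) < δ ^ (2 * α) := Real.rpow_pos_of_pos hδ _
    field_simp
    ring
  rw [harg, Real.sqrt_mul (Real.rpow_nonneg hξ.le _), show Real.sqrt (ξ ^ (2 * α)) = ξ ^ α by
    rw [show (2:ℝ) * α = α + α by ring, Real.rpow_add hξ,
      Real.sqrt_mul_self (Real.rpow_nonneg hξ.le α)]]

end OscAux

namespace OscAux

noncomputable def Pf (c δ α ξ : ℝ) : ℝ := Real.sqrt (c * F α (δ * ξ))
noncomputable def Qf (c δ α ξ : ℝ) : ℝ := c * δ * f α (δ * ξ) / (2 * Pf c δ α ξ)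
noncomputable def fd (α τ : ℝ) : ℝ :=
  Real.sin τ * τ ^ (-(1 + 2 * α)) +
    (1 - Real.cos τ) * (-(1 + 2 * α) * τ ^ (-(1 + 2 * α) - 1))
noncomputable def Qd (c δ α ξ : ℝ) : ℝ :=
  (c * δ * δ * fd α (δ * ξ) * (2 * Pf c δ α ξ) -
    c * δ * f α (δ * ξ) * (2 * Qf c δ α ξ)) / (2 * Pf c δ α ξ) ^ 2
noncomputable def W1 (c δ α ξ : ℝ) : ℝ :=
  α * ξ ^ (α - 1) * Pf c δ α ξ + ξ ^ α * Qf c δ α ξ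
noncomputable def W2 (c δ α ξ : ℝ) : ℝ :=
  α * (α - 1) * ξ ^ (α - 2) * Pf c δ α ξ + 2 * α * ξ ^ (α - 1) * Qf c δ α ξ +
    ξ ^ α * Qd c δ α ξ

variable {c δ ξ : ℝ}

lemma f_hasDeriv (α : ℝ) {τ : ℝ} (hτ : 0 < τ) : HasDerivAt (f α) (fd α τ) τ := by
  have h1 : HasDerivAt (fun τ => 1 - Real.cos τ) (Real.sin τ) τ := by
    simpa using (Real.hasDerivAt_cos τ).const_sub 1
  have h2 : HasDerivAt (fun τ : ℝ => τ ^ (-(1 + 2 * α)))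
      (-(1 + 2 * α) * τ ^ (-(1 + 2 * α) - 1)) τ :=
    Real.hasDerivAt_rpow_const (Or.inl hτ.ne')
  have := h1.mul h2
  exact this

lemma Pf_hasDeriv (hα : 0 < α) (hα1 : α < 1 / 2) (hδ : 0 < δ) (hξ : 0 < ξ)
    (hF : 0 < c * F α (δ * ξ)) :
    HasDerivAt (Pf c δ α) (Qf c δ α ξ) ξ := by
  have hin : HasDerivAt (fun ξ => c * F α (δ * ξ)) (c * (f α (δ * ξ) * (δ * 1))) ξ :=
    ((F_hasDeriv hα hα1 (mul_pos hδ hξ)).comp ξ ((hasDerivAt_id ξ).const_mul δ)).const_mul c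
  have := (Real.hasDerivAt_sqrt hF.ne').comp ξ hin
  refine this.congr_deriv ?_
  have hP : 0 < Pf c δ α ξ := Real.sqrt_pos.2 hF
  unfold Qf at *
  unfold Pf at *
  field_simp

lemma Qf_hasDeriv (hα : 0 < α) (hα1 : α < 1 / 2) (hδ : 0 < δ) (hξ : 0 < ξ)
    (hF : 0 < c * F α (δ * ξ)) :
    HasDerivAt (Qf c δ α) (Qd c δ α ξ) ξ := by
  have hP : 0 < Pf c δ α ξ := Real.sqrt_pos.2 hF
  have hN : HasDerivAt (fun ξ => c * δ * f α (δ * ξ)) (c * δ * δ * fd α (δ * ξ)) ξ := by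
    have := ((f_hasDeriv α (mul_pos hδ hξ)).comp ξ
      ((hasDerivAt_id ξ).const_mul δ)).const_mul (c * δ)
    refine this.congr_deriv ?_; ring
  have hD : HasDerivAt (fun ξ => 2 * Pf c δ α ξ) (2 * Qf c δ α ξ) ξ :=
    (Pf_hasDeriv hα hα1 hδ hξ hF).const_mul 2
  exact hN.div hD (by positivity)

lemma W1_hasDeriv (hα : 0 < α) (hα1 : α < 1 / 2) (hδ : 0 < δ) (hξ : 0 < ξ)
    (hF : 0 < c * F α (δ * ξ)) :
    HasDerivAt (fun ξ => ξ ^ α * Pf c δ α ξ) (W1 c δ α ξ) ξ := by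
  have h1 : HasDerivAt (fun ξ : ℝ => ξ ^ α) (α * ξ ^ (α - 1)) ξ :=
    Real.hasDerivAt_rpow_const (Or.inl hξ.ne')
  have := h1.mul (Pf_hasDeriv hα hα1 hδ hξ hF)
  exact this

lemma W2_hasDeriv (hα : 0 < α) (hα1 : α < 1 / 2) (hδ : 0 < δ) (hξ : 0 < ξ)
    (hF : 0 < c * F α (δ * ξ)) :
    HasDerivAt (W1 c δ α) (W2 c δ α ξ) ξ := by
  have h1 : HasDerivAt (fun ξ : ℝ => ξ ^ (α - 1)) ((α - 1) * ξ ^ (α - 1 - 1)) ξ :=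
    Real.hasDerivAt_rpow_const (Or.inl hξ.ne')
  have h2 : HasDerivAt (fun ξ : ℝ => ξ ^ α) (α * ξ ^ (α - 1)) ξ :=
    Real.hasDerivAt_rpow_const (Or.inl hξ.ne')
  have hsum := ((h1.const_mul α).mul (Pf_hasDeriv hα hα1 hδ hξ hF)).add
    (h2.mul (Qf_hasDeriv hα hα1 hδ hξ hF))
  refine hsum.congr_deriv ?_
  unfold W2
  rw [show α - 1 - 1 = α - 2 by ring]
  ring

end OscAux

namespace OscAux

noncomputable def Rf (c δ α ξ : ℝ) : ℝ :=
  α * (α - 1) * ξ ^ (2 * α - 1) * Pf c δ α ξ +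
    α * c * δ ^ (-(2 * α)) * (1 - Real.cos (δ * ξ)) / (Pf c δ α ξ * ξ) -
    c * (1 + 2 * α) * δ ^ (-(2 * α)) * (1 - Real.cos (δ * ξ)) / (2 * Pf c δ α ξ * ξ) -
    c * δ ^ (-(2 * α)) * (1 - Real.cos (δ * ξ)) * Qf c δ α ξ / (2 * (Pf c δ α ξ) ^ 2)

variable {c δ ξ : ℝ}

lemma key_identity (α : ℝ) (hδ : 0 < δ) (hξ : 0 < ξ) (hF : 0 < c * F α (δ * ξ)) :
    ξ ^ (1 + α) * W2 c δ α ξ =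
      c * δ ^ (1 - 2 * α) / (2 * Pf c δ α ξ) * Real.sin (δ * ξ) + Rf c δ α ξ := by
  have hP : 0 < Pf c δ α ξ := Real.sqrt_pos.2 hF
  have ht : 0 < ξ ^ α := Real.rpow_pos_of_pos hξ α
  have hA : (δ * ξ) ^ (-(1 + 2 * α)) = δ ^ (-(1 + 2 * α)) * ξ ^ (-(1 + 2 * α)) :=
    Real.mul_rpow hδ.le hξ.le
  have hA2 : (δ * ξ) ^ (-(1 + 2 * α) - 1) = δ ^ (-(1 + 2 * α) - 1) * ξ ^ (-(1 + 2 * α) - 1) :=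
    Real.mul_rpow hδ.le hξ.le
  have hD : 0 < δ ^ (-(1 + 2 * α)) := Real.rpow_pos_of_pos hδ _
  have k1 : ξ ^ (α - 2) = ξ ^ α / (ξ * ξ) := by
    rw [Real.rpow_sub hξ, show (2:ℝ) = 1 + 1 by norm_num, Real.rpow_add hξ, Real.rpow_one]
  have k2 : ξ ^ (α - 1) = ξ ^ α / ξ := by rw [Real.rpow_sub hξ, Real.rpow_one]
  have k3 : ξ ^ (1 + α) = ξ * ξ ^ α := by rw [Real.rpow_add hξ, Real.rpow_one]
  have k4 : ξ ^ (2 * α - 1) = ξ ^ α * ξ ^ α / ξ := by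
    rw [show 2 * α - 1 = α + α - 1 by ring, Real.rpow_sub hξ, Real.rpow_add hξ, Real.rpow_one]
  have k5 : ξ ^ (-(1 + 2 * α)) = (ξ * (ξ ^ α * ξ ^ α))⁻¹ := by
    rw [show -(1 + 2 * α) = -(1 + (α + α)) by ring, Real.rpow_neg hξ.le,
      Real.rpow_add hξ, Real.rpow_add hξ, Real.rpow_one]
  have k6 : ξ ^ (-(1 + 2 * α) - 1) = (ξ * ξ * (ξ ^ α * ξ ^ α))⁻¹ := by
    rw [show -(1 + 2 * α) - 1 = -(1 + 1 + (α + α)) by ring, Real.rpow_neg hξ.le,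
      Real.rpow_add hξ, Real.rpow_add hξ, Real.rpow_add hξ, Real.rpow_one]
  have k7 : δ ^ (-(2 * α)) = δ * δ ^ (-(1 + 2 * α)) := by
    rw [show -(2 * α) = 1 + -(1 + 2 * α) by ring, Real.rpow_add hδ, Real.rpow_one]
  have k8 : δ ^ (1 - 2 * α) = δ * δ * δ ^ (-(1 + 2 * α)) := by
    rw [show 1 - 2 * α = 1 + 1 + -(1 + 2 * α) by ring, Real.rpow_add hδ,
      Real.rpow_add hδ, Real.rpow_one]
  have k9 : δ ^ (-(1 + 2 * α) - 1) = δ ^ (-(1 + 2 * α)) / δ := by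
    rw [Real.rpow_sub hδ, Real.rpow_one]
  unfold Rf W2 Qd Qf fd f
  rw [hA, hA2, k9, k7, k8, k1, k2, k3, k4, k5, k6]
  field_simp
  ring

end OscAux

namespace OscAux

lemma limsup_liminf_of_sub_sin {u : ℝ → ℝ} {M δ : ℝ} (hδ : 0 < δ) (hM : 0 ≤ M)
    (h : Tendsto (fun ξ => u ξ - M * Real.sin (δ * ξ)) atTop (𝓝 0)) :
    limsup u atTop = M ∧ liminf u atTop = -M := by
  have habs : ∀ ε > (0:ℝ), ∀ᶠ ξ in atTop, |u ξ - M * Real.sin (δ * ξ)| < ε := by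
    intro ε hε
    filter_upwards [(Metric.tendsto_nhds.1 h) ε hε] with ξ hξ
    rwa [Real.dist_eq, sub_zero] at hξ
  have hbdd : ∀ᶠ ξ in atTop, |u ξ| ≤ M + 1 := by
    filter_upwards [habs 1 one_pos] with ξ hξ
    have hs : |M * Real.sin (δ * ξ)| ≤ M := by
      rw [abs_mul, abs_of_nonneg hM]
      exact mul_le_of_le_one_right hM (Real.abs_sin_le_one _)
    have := abs_sub_abs_le_abs_sub (u ξ) (M * Real.sin (δ * ξ))
    linarith [abs_le.1 hs]
  have hbddle : IsBoundedUnder (· ≤ ·) atTop u :=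
    ⟨M + 1, eventually_map.2 (by filter_upwards [hbdd] with ξ hξ; exact (abs_le.1 hξ).2)⟩
  have hbddge : IsBoundedUnder (· ≥ ·) atTop u :=
    ⟨-(M + 1), eventually_map.2 (by filter_upwards [hbdd] with ξ hξ; exact (abs_le.1 hξ).1)⟩
  -- sequences realizing sin = 1 and sin = -1
  have hseq : ∀ x₀ : ℝ, Tendsto (fun n : ℕ => (x₀ + n * (2 * Real.pi)) / δ) atTop atTop := by
    intro x₀
    apply Tendsto.atTop_div_const hδ
    apply tendsto_atTop_add_const_left
    exact Tendsto.atTop_mul_const (by positivity) tendsto_natCast_atTop_atTop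
  have hval : ∀ x₀ : ℝ, ∀ n : ℕ, Real.sin (δ * ((x₀ + n * (2 * Real.pi)) / δ)) = Real.sin x₀ := by
    intro x₀ n
    rw [mul_div_cancel₀ _ hδ.ne', Real.sin_add_nat_mul_two_pi]
  have key : ∀ x₀ : ℝ, ∀ ε > (0:ℝ), ∃ᶠ ξ in atTop, |u ξ - M * Real.sin x₀| < ε := by
    intro x₀ ε hε
    have h1 : ∀ᶠ n : ℕ in atTop,
        |u ((x₀ + n * (2 * Real.pi)) / δ) - M * Real.sin x₀| < ε := by
      have := (hseq x₀).eventually (habs ε hε)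
      filter_upwards [this] with n hn
      rwa [hval x₀ n] at hn
    exact (hseq x₀).frequently h1.frequently
  constructor
  · refine le_antisymm ?_ ?_
    · refine le_of_forall_pos_le_add fun ε hε => ?_
      refine limsup_le_of_le hbddge.isCoboundedUnder_le ?_
      filter_upwards [habs ε hε] with ξ hξ
      have hs : M * Real.sin (δ * ξ) ≤ M :=
        mul_le_of_le_one_right hM (Real.sin_le_one _)
      have := (abs_lt.1 hξ).2
      linarith
    · refine le_of_forall_sub_le fun ε hε => ?_
      refine le_limsup_of_frequently_le ?_ hbddle
      have := key (Real.pi / 2) ε hε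
      rw [Real.sin_pi_div_two] at this
      refine this.mono fun ξ hξ => ?_
      have := (abs_lt.1 hξ).1
      linarith
  · refine le_antisymm ?_ ?_
    · rw [show -M = -M + 0 by ring]
      refine le_of_forall_pos_le_add fun ε hε => ?_
      refine liminf_le_of_frequently_le ?_ hbddge
      have := key (-(Real.pi / 2)) ε hε
      rw [Real.sin_neg, Real.sin_pi_div_two] at this
      refine this.mono fun ξ hξ => ?_
      have := (abs_lt.1 hξ).2
      linarith
    · refine le_of_forall_sub_le fun ε hε => ?_
      refine le_liminf_of_le hbddle.isCoboundedUnder_ge ?_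
      filter_upwards [habs ε hε] with ξ hξ
      have hs : -M ≤ M * Real.sin (δ * ξ) := by
        have := Real.neg_one_le_sin (δ * ξ)
        nlinarith
      have := (abs_lt.1 hξ).1
      linarith

end OscAux

namespace OscAux

variable {c δ α : ℝ}

lemma cos_bdd (δ : ℝ) :
    IsBoundedUnder (· ≤ ·) atTop ((‖·‖) ∘ fun ξ : ℝ => 1 - Real.cos (δ * ξ)) := by
  refine ⟨2, eventually_map.2 (.of_forall fun ξ => ?_)⟩
  have h1 := Real.neg_one_le_cos (δ * ξ)
  have h2 := Real.cos_le_one (δ * ξ)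
  show |1 - Real.cos (δ * ξ)| ≤ 2
  rw [abs_le]
  constructor <;> linarith

lemma sin_bdd (δ : ℝ) :
    IsBoundedUnder (· ≤ ·) atTop ((‖·‖) ∘ fun ξ : ℝ => Real.sin (δ * ξ)) :=
  ⟨1, eventually_map.2 (.of_forall fun ξ => Real.abs_sin_le_one _)⟩

lemma Fcomp_tendsto (hα : 0 < α) (hα1 : α < 1 / 2) (hδ : 0 < δ) :
    Tendsto (fun ξ => F α (δ * ξ)) atTop (𝓝 (I α)) :=
  (F_tendsto hα hα1).comp (Tendsto.const_mul_atTop hδ tendsto_id)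

lemma Pf_tendsto (hα : 0 < α) (hα1 : α < 1 / 2) (hδ : 0 < δ) (c : ℝ) :
    Tendsto (Pf c δ α) atTop (𝓝 (Real.sqrt (c * I α))) :=
  (Real.continuous_sqrt.tendsto _).comp ((Fcomp_tendsto hα hα1 hδ).const_mul c)

lemma fcomp_tendsto (hα : 0 < α) (hα1 : α < 1 / 2) (hδ : 0 < δ) :
    Tendsto (fun ξ => f α (δ * ξ)) atTop (𝓝 0) := by
  have hpow : Tendsto (fun ξ : ℝ => (δ * ξ) ^ (-(1 + 2 * α))) atTop (𝓝 0) :=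
    (tendsto_rpow_neg_atTop (by linarith)).comp (Tendsto.const_mul_atTop hδ tendsto_id)
  exact isBoundedUnder_le_mul_tendsto_zero (cos_bdd δ) hpow

lemma Qf_tendsto (hα : 0 < α) (hα1 : α < 1 / 2) (hδ : 0 < δ) (hc : 0 < c)
    (hI : 0 < I α) :
    Tendsto (Qf c δ α) atTop (𝓝 0) := by
  have hL : 0 < Real.sqrt (c * I α) := Real.sqrt_pos.2 (mul_pos hc hI)
  have hinv : Tendsto (fun ξ => (2 * Pf c δ α ξ)⁻¹) atTop
      (𝓝 (2 * Real.sqrt (c * I α))⁻¹) :=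
    (Tendsto.const_mul 2 (Pf_tendsto hα hα1 hδ c)).inv₀ (by positivity)
  have := ((fcomp_tendsto hα hα1 hδ).const_mul (c * δ)).mul hinv
  rw [mul_zero, zero_mul] at this
  refine this.congr fun ξ => ?_
  unfold Qf
  rw [div_eq_mul_inv]

lemma Rf_tendsto (hα : 0 < α) (hα1 : α < 1 / 2) (hδ : 0 < δ) (hc : 0 < c)
    (hI : 0 < I α) :
    Tendsto (Rf c δ α) atTop (𝓝 0) := by
  have hL : 0 < Real.sqrt (c * I α) := Real.sqrt_pos.2 (mul_pos hc hI)
  have hPt := Pf_tendsto hα hα1 hδ (α := α) c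
  have hT1 : Tendsto (fun ξ => α * (α - 1) * ξ ^ (2 * α - 1) * Pf c δ α ξ) atTop (𝓝 0) := by
    have hpow : Tendsto (fun ξ : ℝ => ξ ^ (2 * α - 1)) atTop (𝓝 0) := by
      have := tendsto_rpow_neg_atTop (y := 1 - 2 * α) (by linarith)
      simpa [show -(1 - 2 * α) = 2 * α - 1 by ring] using this
    have := (hpow.const_mul (α * (α - 1))).mul hPt
    simpa using this
  have hT2 : Tendsto (fun ξ => α * c * δ ^ (-(2 * α)) * (1 - Real.cos (δ * ξ)) /
      (Pf c δ α ξ * ξ)) atTop (𝓝 0) := by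
    have hdenom : Tendsto (fun ξ => Pf c δ α ξ * ξ) atTop atTop :=
      Tendsto.pos_mul_atTop hL hPt tendsto_id
    have hz : Tendsto (fun ξ => α * c * δ ^ (-(2 * α)) * (Pf c δ α ξ * ξ)⁻¹) atTop (𝓝 0) := by
      have := hdenom.inv_tendsto_atTop.const_mul (α * c * δ ^ (-(2 * α)))
      simpa using this
    have := hz.zero_mul_isBoundedUnder_le (cos_bdd δ)
    refine this.congr fun ξ => ?_
    rw [div_eq_mul_inv]; ring
  have hT3 : Tendsto (fun ξ => c * (1 + 2 * α) * δ ^ (-(2 * α)) * (1 - Real.cos (δ * ξ)) /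
      (2 * Pf c δ α ξ * ξ)) atTop (𝓝 0) := by
    have hdenom : Tendsto (fun ξ => 2 * Pf c δ α ξ * ξ) atTop atTop :=
      Tendsto.pos_mul_atTop (by positivity) (hPt.const_mul 2) tendsto_id
    have hz : Tendsto (fun ξ => c * (1 + 2 * α) * δ ^ (-(2 * α)) *
        (2 * Pf c δ α ξ * ξ)⁻¹) atTop (𝓝 0) := by
      have := hdenom.inv_tendsto_atTop.const_mul (c * (1 + 2 * α) * δ ^ (-(2 * α)))
      simpa using this
    have := hz.zero_mul_isBoundedUnder_le (cos_bdd δ)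
    refine this.congr fun ξ => ?_
    rw [div_eq_mul_inv]; ring
  have hT4 : Tendsto (fun ξ => c * δ ^ (-(2 * α)) * (1 - Real.cos (δ * ξ)) * Qf c δ α ξ /
      (2 * (Pf c δ α ξ) ^ 2)) atTop (𝓝 0) := by
    have hinv : Tendsto (fun ξ => (2 * (Pf c δ α ξ) ^ 2)⁻¹) atTop
        (𝓝 (2 * (Real.sqrt (c * I α)) ^ 2)⁻¹) :=
      (((hPt.pow 2).const_mul 2)).inv₀ (by positivity)
    have hz : Tendsto (fun ξ => c * δ ^ (-(2 * α)) * Qf c δ α ξ *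
        (2 * (Pf c δ α ξ) ^ 2)⁻¹) atTop (𝓝 0) := by
      have := ((Qf_tendsto hα hα1 hδ hc hI).const_mul (c * δ ^ (-(2 * α)))).mul hinv
      simpa using this
    have := hz.zero_mul_isBoundedUnder_le (cos_bdd δ)
    refine this.congr fun ξ => ?_
    rw [div_eq_mul_inv]; ring
  have := ((hT1.add hT2).sub hT3).sub hT4
  rw [add_zero, sub_zero, sub_zero] at this
  exact this

end OscAux

namespace OscAux

lemma deriv2_eventually (κ ρ δ α : ℝ) (hκ : 0 < κ) (hρ : 0 < ρ) (hδ : 0 < δ)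
    (hα : 0 < α) (hα1 : α < 1 / 2) :
    ∀ᶠ ξ in atTop, deriv (deriv (omega κ ρ δ α)) ξ = W2 (4 * κ / ρ) δ α ξ := by
  have hc : 0 < 4 * κ / ρ := by positivity
  have hI := I_pos hα hα1
  have hFev : ∀ᶠ ξ in atTop, 0 < 4 * κ / ρ * F α (δ * ξ) :=
    (((Fcomp_tendsto hα hα1 hδ).const_mul (4 * κ / ρ)).eventually
      (eventually_gt_nhds (mul_pos hc hI)))
  obtain ⟨T, hT⟩ := eventually_atTop.1 (hFev.and (eventually_gt_atTop 0))
  have hmemIoi : ∀ x ∈ Ioi T, (0 < 4 * κ / ρ * F α (δ * x)) ∧ 0 < x := fun x hx => hT x (le_of_lt hx)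
  have homega : ∀ ξ ∈ Ioi T, HasDerivAt (omega κ ρ δ α) (W1 (4 * κ / ρ) δ α ξ) ξ := by
    intro ξ hξ
    have hEq : omega κ ρ δ α =ᶠ[𝓝 ξ] fun x => x ^ α * Pf (4 * κ / ρ) δ α x :=
      eventually_of_mem (isOpen_Ioi.mem_nhds hξ) fun x hx =>
        omega_eq κ ρ δ α hρ hδ hα hα1 (hmemIoi x hx).2
    exact (W1_hasDeriv hα hα1 hδ (hmemIoi ξ hξ).2 (hmemIoi ξ hξ).1).congr_of_eventuallyEq hEq
  have hd2 : ∀ ξ ∈ Ioi T, deriv (deriv (omega κ ρ δ α)) ξ = W2 (4 * κ / ρ) δ α ξ := by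
    intro ξ hξ
    have hEq2 : deriv (omega κ ρ δ α) =ᶠ[𝓝 ξ] W1 (4 * κ / ρ) δ α :=
      eventually_of_mem (isOpen_Ioi.mem_nhds hξ) fun x hx => (homega x hx).deriv
    exact ((W2_hasDeriv hα hα1 hδ (hmemIoi ξ hξ).2 (hmemIoi ξ hξ).1).congr_of_eventuallyEq
      hEq2).deriv
  filter_upwards [eventually_gt_atTop T] with ξ hξ
  exact hd2 ξ hξ

lemma main_tendsto (κ ρ δ α : ℝ) (hκ : 0 < κ) (hρ : 0 < ρ) (hδ : 0 < δ)
    (hα : 0 < α) (hα1 : α < 1 / 2) :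
    Tendsto (fun ξ : ℝ => ξ ^ (1 + α) * deriv (deriv (omega κ ρ δ α)) ξ -
      4 * κ / ρ * δ ^ (1 - 2 * α) / (2 * Real.sqrt (4 * κ / ρ * I α)) * Real.sin (δ * ξ))
      atTop (𝓝 0) := by
  have hc : 0 < 4 * κ / ρ := by positivity
  have hI := I_pos hα hα1
  have hL : 0 < Real.sqrt (4 * κ / ρ * I α) := Real.sqrt_pos.2 (mul_pos hc hI)
  set M := 4 * κ / ρ * δ ^ (1 - 2 * α) / (2 * Real.sqrt (4 * κ / ρ * I α)) with hM
  have hFev : ∀ᶠ ξ in atTop, 0 < 4 * κ / ρ * F α (δ * ξ) :=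
    (((Fcomp_tendsto hα hα1 hδ).const_mul (4 * κ / ρ)).eventually
      (eventually_gt_nhds (mul_pos hc hI)))
  have hPt := Pf_tendsto hα hα1 hδ (α := α) (4 * κ / ρ)
  have hcorr : Tendsto (fun ξ => (4 * κ / ρ * δ ^ (1 - 2 * α) *
      (2 * Pf (4 * κ / ρ) δ α ξ)⁻¹ - M) * Real.sin (δ * ξ)) atTop (𝓝 0) := by
    have hfac : Tendsto (fun ξ => 4 * κ / ρ * δ ^ (1 - 2 * α) *
        (2 * Pf (4 * κ / ρ) δ α ξ)⁻¹ - M) atTop (𝓝 0) := by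
      have h1 : Tendsto (fun ξ => (2 * Pf (4 * κ / ρ) δ α ξ)⁻¹) atTop
          (𝓝 (2 * Real.sqrt (4 * κ / ρ * I α))⁻¹) :=
        (hPt.const_mul 2).inv₀ (by positivity)
      have := (h1.const_mul (4 * κ / ρ * δ ^ (1 - 2 * α))).sub_const M
      have heq : 4 * κ / ρ * δ ^ (1 - 2 * α) *
          (2 * Real.sqrt (4 * κ / ρ * I α))⁻¹ - M = 0 := by
        rw [hM, div_eq_mul_inv]; ring
      rwa [heq] at this
    exact hfac.zero_mul_isBoundedUnder_le (sin_bdd δ)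
  have h0 := hcorr.add (Rf_tendsto hα hα1 hδ hc hI)
  rw [add_zero] at h0
  have h1 : Tendsto (fun ξ => ξ ^ (1 + α) * W2 (4 * κ / ρ) δ α ξ - M * Real.sin (δ * ξ))
      atTop (𝓝 0) := by
    refine h0.congr' ?_
    filter_upwards [hFev, eventually_gt_atTop 0] with ξ hF hξ0
    rw [key_identity α hδ hξ0 hF, div_eq_mul_inv]
    ring
  refine h1.congr' ?_
  filter_upwards [deriv2_eventually κ ρ δ α hκ hρ hδ hα hα1] with ξ hd
  rw [hd]

end OscAux

theorem second_deriv_omega_oscillation (κ ρ δ α : ℝ) (hκ : 0 < κ) (hρ : 0 < ρ)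
    (hδ : 0 < δ) (hα : 0 < α) (hα1 : α < 1 / 2) :
    Filter.liminf
        (fun ξ : ℝ => ξ ^ (1 + α) * deriv (deriv (omega κ ρ δ α)) ξ) atTop =
      -(Real.sqrt κ * δ ^ (1 - 2 * α) / Real.sqrt ρ /
        Real.sqrt (∫ τ in Set.Ioi (0 : ℝ),
          (1 - Real.cos τ) / τ ^ (1 + 2 * α))) ∧
    Filter.limsup
        (fun ξ : ℝ => ξ ^ (1 + α) * deriv (deriv (omega κ ρ δ α)) ξ) atTop =
      Real.sqrt κ * δ ^ (1 - 2 * α) / Real.sqrt ρ /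
        Real.sqrt (∫ τ in Set.Ioi (0 : ℝ),
          (1 - Real.cos τ) / τ ^ (1 + 2 * α)) := by
  have hI := OscAux.I_pos hα hα1
  have hL : 0 < Real.sqrt (4 * κ / ρ * OscAux.I α) :=
    Real.sqrt_pos.2 (mul_pos (by positivity) hI)
  have hδp : 0 < δ ^ (1 - 2 * α) := Real.rpow_pos_of_pos hδ _
  have hM0 : 0 ≤ 4 * κ / ρ * δ ^ (1 - 2 * α) / (2 * Real.sqrt (4 * κ / ρ * OscAux.I α)) := by
    positivity
  obtain ⟨hsup, hinf⟩ := OscAux.limsup_liminf_of_sub_sin hδ hM0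
    (OscAux.main_tendsto κ ρ δ α hκ hρ hδ hα hα1)
  have hMeq : 4 * κ / ρ * δ ^ (1 - 2 * α) / (2 * Real.sqrt (4 * κ / ρ * OscAux.I α)) =
      Real.sqrt κ * δ ^ (1 - 2 * α) / Real.sqrt ρ / Real.sqrt (OscAux.I α) := by
    have hsκ : 0 < Real.sqrt κ := Real.sqrt_pos.2 hκ
    have hsρ : 0 < Real.sqrt ρ := Real.sqrt_pos.2 hρ
    have hsI : 0 < Real.sqrt (OscAux.I α) := Real.sqrt_pos.2 hI
    have hκ' : Real.sqrt κ * Real.sqrt κ = κ := Real.mul_self_sqrt hκ.le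
    have hρ' : Real.sqrt ρ * Real.sqrt ρ = ρ := Real.mul_self_sqrt hρ.le
    have hI' : Real.sqrt (OscAux.I α) * Real.sqrt (OscAux.I α) = OscAux.I α :=
      Real.mul_self_sqrt hI.le
    have hsq : 4 * κ / ρ * OscAux.I α =
        (2 * Real.sqrt κ / Real.sqrt ρ * Real.sqrt (OscAux.I α)) ^ 2 := by
      field_simp
      rw [Real.sq_sqrt hκ.le, Real.sq_sqrt hρ.le, Real.sq_sqrt hI.le]; ring
    rw [hsq, Real.sqrt_sq (by positivity)]
    field_simp
    rw [Real.sq_sqrt hκ.le, Real.sq_sqrt hρ.le]; ring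
  rw [hMeq] at hsup hinf
  rw [← OscAux.I_eq_J α]
  exact ⟨hinf, hsup⟩
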